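/- Let 0 < δ < 1 and L ∈ ℕ, set μ_{ℓ,δ} = min(2^{−ℓ} δ^{−1}, 1) for ℓ = 0,…,L, and let P_{ℓ,L} ∈ ℝ^{2^L × 2^ℓ} be the prolongation matrices with entries (P_{ℓ,L})_{i,j} = 2^{(ℓ−L)/2} max(0, 1 − 2^ℓ |i 2^{−L} − j 2^{−ℓ}|), i = 1,…,2^L, j = 1,…,2^ℓ. Then the preconditioner matrix C_L = Σ_{ℓ=0}^{L} μ_{ℓ,δ} P_{ℓ,L} P_{ℓ,L}^T ∈ ℝ^{2^L × 2^L} admits a matrix QTT decomposition with all ranks equal to 8. -/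

import Mathlib

open MeasureTheory Set Polynomial

/-! Common definitions: Lebesgue/Sobolev norms on `I = (0,1)`, finite element
spaces on the uniform dyadic grid `T_L`, the singularly perturbed problem
`-δ²u'' + cu = f`, and (Q)TT decompositions of vectors in `ℝ^{2^L}`. -/

/-- Squared `L²(0,1)` norm. -/
noncomputable def L2sq (v : ℝ → ℝ) : ℝ := ∫ x in Ioo (0:ℝ) 1, (v x)^2

/-- `L²(0,1)` norm. -/
noncomputable def L2norm (v : ℝ → ℝ) : ℝ := Real.sqrt (L2sq v)

/-- `H¹(0,1)` norm of a function `v` with derivative `v'`. -/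
noncomputable def H1norm (v v' : ℝ → ℝ) : ℝ := Real.sqrt (L2sq v + L2sq v')

/-- `H²(0,1)` norm of a function `v` with derivatives `v'`, `v''`. -/
noncomputable def H2norm (v v' v'' : ℝ → ℝ) : ℝ := Real.sqrt (L2sq v + L2sq v' + L2sq v'')

/-- Energy norm `‖v‖_δ = (δ²‖v'‖² + ‖v‖²)^(1/2)`. -/
noncomputable def energyNorm (δ : ℝ) (v v' : ℝ → ℝ) : ℝ := Real.sqrt (δ^2 * L2sq v' + L2sq v)

/-- Membership in `L²(0,1)`. -/
def MemL2 (v : ℝ → ℝ) : Prop := IntegrableOn (fun x => (v x)^2) (Ioo (0:ℝ) 1)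

/-- `v ∈ H¹(0,1)` with (weak) derivative `v'`: `v` is absolutely continuous on `[0,1]`
(the fundamental theorem of calculus holds with density `v'`) and `v, v' ∈ L²(0,1)`. -/
def IsH1 (v v' : ℝ → ℝ) : Prop :=
  (∀ x ∈ Icc (0:ℝ) 1, v x = v 0 + ∫ t in (0:ℝ)..x, v' t) ∧
  ContinuousOn v (Icc (0:ℝ) 1) ∧ MemL2 v ∧ MemL2 v'

/-- `v ∈ H²(0,1)` with derivatives `v'` and `v''`. -/
def IsH2 (v v' v'' : ℝ → ℝ) : Prop := IsH1 v v' ∧ IsH1 v' v''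

/-- The bilinear form `a_δ(u,v) = ∫_I (δ² u'v' + c u v)`. -/
noncomputable def aForm (δ : ℝ) (c : ℝ → ℝ) (u u' v v' : ℝ → ℝ) : ℝ :=
  ∫ x in Ioo (0:ℝ) 1, (δ^2 * u' x * v' x + c x * u x * v x)

/-- Mesh width `h = 1/(2^L+1)` of the uniform grid `T_L`. -/
noncomputable def gridh (L : ℕ) : ℝ := 1 / (2^L + 1)

/-- Continuous, piecewise affine functions on the uniform grid `T_L`
with nodes `x_j = j·h`, `j = 0,…,2^L+1`. -/
def PL (L : ℕ) (w : ℝ → ℝ) : Prop :=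
  ContinuousOn w (Icc (0:ℝ) 1) ∧
  ∀ j : ℕ, j < 2^L + 1 →
    ∃ a b : ℝ, ∀ x ∈ Icc ((j:ℝ) * gridh L) (((j:ℝ)+1) * gridh L), w x = a * x + b

/-- `V^L₀`: continuous piecewise affine on `T_L`, vanishing at the endpoints. -/
def PL0 (L : ℕ) (w : ℝ → ℝ) : Prop := PL L w ∧ w 0 = 0 ∧ w 1 = 0

/-- `V^L` with boundary values `α₀`, `α₁`. -/
def MemVL (L : ℕ) (α₀ α₁ : ℝ) (w : ℝ → ℝ) : Prop := PL L w ∧ w 0 = α₀ ∧ w 1 = α₁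

/-- The Lagrange hat function at node `x_i = i·h` of the grid `T_L`. -/
noncomputable def hat (L : ℕ) (i : ℕ) (x : ℝ) : ℝ :=
  max 0 (1 - |x - (i:ℝ) * gridh L| / gridh L)

/-- Membership in `V(I, p, T^hp_κ)`: continuous on `[0,1]`, a polynomial of degree `≤ p`
on each of the three subintervals of the grid `{0, min(1/4,κ), 1-min(1/4,κ), 1}`,
with boundary values `α₀`, `α₁`. -/
def MemVhp (p : ℕ) (κ α₀ α₁ : ℝ) (v : ℝ → ℝ) : Prop :=
  ContinuousOn v (Icc (0:ℝ) 1) ∧ v 0 = α₀ ∧ v 1 = α₁ ∧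
  ∃ P₁ P₂ P₃ : Polynomial ℝ,
    P₁.natDegree ≤ p ∧ P₂.natDegree ≤ p ∧ P₃.natDegree ≤ p ∧
    (∀ x ∈ Icc (0:ℝ) (min (1/4) κ), v x = P₁.eval x) ∧
    (∀ x ∈ Icc (min (1/4) κ) (1 - min (1/4) κ), v x = P₂.eval x) ∧
    (∀ x ∈ Icc (1 - min (1/4) κ) 1, v x = P₃.eval x)

/-- Weak solution `u ∈ H¹(0,1)` (with weak derivative `u'`) of
`-δ²u'' + cu = f` in `(0,1)`, `u(0) = α₀`, `u(1) = α₁`. -/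
def WeakSol (δ : ℝ) (c f : ℝ → ℝ) (α₀ α₁ : ℝ) (u u' : ℝ → ℝ) : Prop :=
  IsH1 u u' ∧ u 0 = α₀ ∧ u 1 = α₁ ∧
  ∀ v v' : ℝ → ℝ, IsH1 v v' → v 0 = 0 → v 1 = 0 →
    aForm δ c u u' v v' = ∫ x in Ioo (0:ℝ) 1, f x * v x

/-- Strong solution `u ∈ H²(0,1)` with homogeneous Dirichlet boundary conditions:
`-δ²u'' + c u = f` a.e. in `(0,1)`, `u(0)=u(1)=0`. -/
def StrongSol0 (δ : ℝ) (c f : ℝ → ℝ) (u u' u'' : ℝ → ℝ) : Prop :=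
  IsH2 u u' u'' ∧ u 0 = 0 ∧ u 1 = 0 ∧
  ∀ᵐ x ∂(volume.restrict (Ioo (0:ℝ) 1)), -δ^2 * u'' x + c x * u x = f x

/-- `Pv` (with derivative `Pv'`) is the Galerkin projection of `v` (with derivative `v'`)
onto `V^L₀`: `Pv ∈ V^L₀` and `a_δ(Pv - v, w) = 0` for all `w ∈ V^L₀`. -/
def IsGalerkin0 (δ : ℝ) (c : ℝ → ℝ) (L : ℕ) (v v' Pv Pv' : ℝ → ℝ) : Prop :=
  PL0 L Pv ∧ IsH1 Pv Pv' ∧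
  ∀ w w' : ℝ → ℝ, PL0 L w → IsH1 w w' →
    aForm δ c (fun x => Pv x - v x) (fun x => Pv' x - v' x) w w' = 0

/-- The `K`-functional between `L²(0,1)` and `H¹₀(0,1)`:
`K(t,v) = inf {‖v₀‖_{L²} + t‖v₁‖_{H¹} : v = v₀ + v₁, v₀ ∈ L², v₁ ∈ H¹₀}`. -/
noncomputable def Kfun (t : ℝ) (v : ℝ → ℝ) : ℝ :=
  sInf {s : ℝ | ∃ v₀ v₁ v₁' : ℝ → ℝ, (∀ x, v x = v₀ x + v₁ x) ∧ MemL2 v₀ ∧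
    IsH1 v₁ v₁' ∧ v₁ 0 = 0 ∧ v₁ 1 = 0 ∧ s = L2norm v₀ + t * H1norm v₁ v₁'}

/-- The set `{K(t,v)/√t : t > 0}` over which the `H^{1/2,∞}` norm is taken. -/
def HhalfSet (v : ℝ → ℝ) : Set ℝ := {s : ℝ | ∃ t : ℝ, 0 < t ∧ s = Kfun t v / Real.sqrt t}

/-- The interpolation norm `‖v‖_{1/2,∞} = sup_{t>0} K(t,v)/t^{1/2}`. -/
noncomputable def HhalfNorm (v : ℝ → ℝ) : ℝ := sSup (HhalfSet v)

/-- `v ∈ H^{1/2,∞}(0,1)`: the sup defining `‖v‖_{1/2,∞}` is finite. -/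
def MemHhalf (v : ℝ → ℝ) : Prop := BddAbove (HhalfSet v)

/-- Partial products `V¹(i₁)⋯Vⁿ(iₙ)` of TT-cores. -/
def qttEntry {rk : ℕ → ℕ}
    (V : ∀ j : ℕ, Fin 2 → Matrix (Fin (rk j)) (Fin (rk (j+1))) ℝ) :
    (n : ℕ) → (Fin n → Fin 2) → Matrix (Fin (rk 0)) (Fin (rk n)) ℝ
  | 0, _ => 1
  | n+1, i => qttEntry V n (fun j => i j.castSucc) * V n (i (Fin.last n))

/-- The binary digits `i_1,…,i_L` of an index `i = Σ_{j=1}^L 2^{L-j} i_j`. -/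
def bits (L : ℕ) (i : ℕ) : Fin L → Fin 2 :=
  fun j => ⟨i / 2^(L - 1 - (j:ℕ)) % 2, Nat.mod_lt _ (by norm_num)⟩

/-- `u ∈ ℝ^{2^L}` admits a QTT decomposition with rank sequence `rk`
(`rk 0 = rk L = 1`): `u(i) = V¹(i₁)⋯V^L(i_L)` for all indices `i`. -/
def HasQTTRanks (L : ℕ) (u : Fin (2^L) → ℝ) (rk : ℕ → ℕ) : Prop :=
  rk 0 = 1 ∧ rk L = 1 ∧
  ∃ V : ∀ j : ℕ, Fin 2 → Matrix (Fin (rk j)) (Fin (rk (j+1))) ℝ,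
    ∀ (i : Fin (2^L)) (a : Fin (rk 0)) (b : Fin (rk L)),
      u i = qttEntry V L (bits L (i:ℕ)) a b

/-- `u ∈ ℝ^{2^L}` admits a QTT decomposition with all ranks `r_1,…,r_{L-1}` bounded by `r`. -/
def HasQTT (L : ℕ) (u : Fin (2^L) → ℝ) (r : ℕ) : Prop :=
  ∃ rk : ℕ → ℕ, HasQTTRanks L u rk ∧ ∀ j : ℕ, 0 < j → j < L → rk j ≤ r

/-- Number of parameters `Σ_{j=1}^L r_{j-1}·2·r_j` of a QTT decomposition with ranks `rk`. -/
def Ndof (L : ℕ) (rk : ℕ → ℕ) : ℕ := ∑ j ∈ Finset.range L, rk j * 2 * rk (j+1)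

/-- Partial products of matrix (operator) TT-cores. -/
def qttEntryM {rk : ℕ → ℕ}
    (V : ∀ j : ℕ, Fin 2 → Fin 2 → Matrix (Fin (rk j)) (Fin (rk (j+1))) ℝ) :
    (n : ℕ) → (Fin n → Fin 2) → (Fin n → Fin 2) → Matrix (Fin (rk 0)) (Fin (rk n)) ℝ
  | 0, _, _ => 1
  | n+1, i, m =>
      qttEntryM V n (fun j => i j.castSucc) (fun j => m j.castSucc) *
        V n (i (Fin.last n)) (m (Fin.last n))

/-- A matrix `A ∈ ℝ^{2^L × 2^L}` admits a matrix QTT decomposition with rank sequence `rk`: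
`A(i,m) = V¹(i₁,m₁)⋯V^L(i_L,m_L)`. -/
def HasMatrixQTTRanks (L : ℕ) (A : Matrix (Fin (2^L)) (Fin (2^L)) ℝ) (rk : ℕ → ℕ) : Prop :=
  rk 0 = 1 ∧ rk L = 1 ∧
  ∃ V : ∀ j : ℕ, Fin 2 → Fin 2 → Matrix (Fin (rk j)) (Fin (rk (j+1))) ℝ,
    ∀ (i m : Fin (2^L)) (a : Fin (rk 0)) (b : Fin (rk L)),
      A i m = qttEntryM V L (bits L (i:ℕ)) (bits L (m:ℕ)) a b

/-- The prolongation matrix `P_{ℓ,L} ∈ ℝ^{2^L × 2^ℓ}` (indices starting from 1),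
`(P_{ℓ,L})_{i,j} = 2^{(ℓ-L)/2} max(0, 1 - 2^ℓ|i2^{-L} - j2^{-ℓ}|)`. -/
noncomputable def Pmat (L ℓ : ℕ) : Matrix (Fin (2^L)) (Fin (2^ℓ)) ℝ :=
  fun i j => (2:ℝ) ^ (((ℓ:ℝ) - (L:ℝ)) / 2) *
    max 0 (1 - (2:ℝ)^ℓ * |(((i:ℕ):ℝ) + 1) / 2^L - (((j:ℕ):ℝ) + 1) / 2^ℓ|)

/-- The coefficients `μ_{ℓ,δ} = min(2^{-ℓ}δ^{-1}, 1)`. -/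
noncomputable def muCoeff (δ : ℝ) (ℓ : ℕ) : ℝ := min ((2:ℝ)^(-(ℓ:ℤ)) * δ⁻¹) 1

/-- The BPX-type preconditioner `C_L = Σ_{ℓ=0}^L μ_{ℓ,δ} P_{ℓ,L} P_{ℓ,L}ᵀ`. -/
noncomputable def precondC (δ : ℝ) (L : ℕ) : Matrix (Fin (2^L)) (Fin (2^L)) ℝ :=
  ∑ ℓ ∈ Finset.range (L+1), (muCoeff δ ℓ) • (Pmat L ℓ * (Pmat L ℓ).transpose)


/-!
Put `x_i = (i + 1) / 2^L`. On level `ℓ` the point `x_i` lies in the cell `A = i / 2^(L-ℓ)` at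
local coordinate `t ∈ (0, 1]`, and the only hat functions not vanishing there sit at the nodes `A`
and `A + 1` (nodes are numbered from `1`: node `0` carries no hat function), with values `1 - t`
and `t`. Hence `(P_ℓ P_ℓᵀ)(i, m) = 2^(ℓ-L) Σ_{a,b} [A + a = B + b > 0] (1 - t, t)_a (1 - s, s)_b`.

Passing from level `ℓ` to `ℓ + 1` reads one more binary digit of `i` and of `m`. The overlap
pattern `[A + a = B + b > 0]` on level `ℓ + 1` is a linear image of the one on level `ℓ`, and the
shape values `(1 - t, t)` on level `ℓ` are a linear image of those on level `ℓ + 1`. So the partial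
sums of the series are carried by a state with `4 + 4` entries (the overlap pattern, and the
coefficients of the partial sum as a bilinear form in the current shape values), on which each
pair of digits acts by an `8 × 8` matrix. These matrices, capped by the initial state and the
final read-out, are the QTT cores.
-/

open Matrix
open scoped Kronecker

section CoreProduct

variable {ι : Type*} [Fintype ι] [DecidableEq ι]

def coreProduct (W : ℕ → Fin 2 → Fin 2 → Matrix ι ι ℝ) (d e : ℕ → Fin 2) :
    ℕ → Matrix ι ι ℝ
  | 0 => 1
  | n + 1 => coreProduct W d e n * W n (d n) (e n)

def binaryDigit (L i j : ℕ) : Fin 2 := ⟨i / 2 ^ (L - 1 - j) % 2, Nat.mod_lt _ two_pos⟩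

def boundaryRanks (L r j : ℕ) : ℕ := if j = 0 ∨ L ≤ j then 1 else r

variable (L : ℕ) (u v : ι → ℝ)

-- The caps of the first and last core absorb `u` and `v`; all other caps are identities,
-- reindexed along `Fintype.equivFin ι`.
noncomputable def leftCap (j : ℕ) : Matrix (Fin (boundaryRanks L (Fintype.card ι) j)) ι ℝ :=
  if j = 0 then of fun _ b => u b
  else of fun a b => if (a : ℕ) = Fintype.equivFin ι b then 1 else 0

noncomputable def rightCap (j : ℕ) : Matrix ι (Fin (boundaryRanks L (Fintype.card ι) j)) ℝ :=
  if j = L then of fun a _ => v a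
  else of fun a b => if (Fintype.equivFin ι a : ℕ) = b then 1 else 0

lemma rightCap_mul_leftCap {j : ℕ} (hj0 : 0 < j) (hjL : j < L) :
    rightCap L v j * leftCap L u j = 1 := by
  have hr : boundaryRanks L (Fintype.card ι) j = Fintype.card ι := if_neg (by omega)
  ext a b
  rw [rightCap, leftCap, if_neg hjL.ne, if_neg hj0.ne', mul_apply, one_apply]
  simp only [of_apply, mul_ite, mul_one, mul_zero]
  have ha : (Fintype.equivFin ι a : ℕ) < boundaryRanks L (Fintype.card ι) j :=
    hr.symm ▸ (Fintype.equivFin ι a).isLt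
  rw [Finset.sum_eq_single ⟨_, ha⟩]
  · simp [Fin.val_eq_val, (Fintype.equivFin ι).apply_eq_iff_eq]
  · intro k _ hk
    rw [if_neg fun h => hk (Fin.ext (Eq.symm h)), ite_self]
  · simp

noncomputable def cappedCores (W : ℕ → Fin 2 → Fin 2 → Matrix ι ι ℝ) (j : ℕ) (x y : Fin 2) :
    Matrix (Fin (boundaryRanks L (Fintype.card ι) j))
      (Fin (boundaryRanks L (Fintype.card ι) (j + 1))) ℝ :=
  leftCap L u j * W j x y * rightCap L v (j + 1)

lemma qttEntryM_cappedCores (W : ℕ → Fin 2 → Fin 2 → Matrix ι ι ℝ) (d e : ℕ → Fin 2) {n : ℕ}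
    (hn0 : 0 < n) (hnL : n ≤ L) :
    qttEntryM (cappedCores L u v W) n (fun j => d j) (fun j => e j) =
      leftCap L u 0 * coreProduct W d e n * rightCap L v n := by
  induction n, hn0 using Nat.le_induction with
  | base =>
    simp only [qttEntryM, coreProduct, cappedCores, Fin.val_last, Matrix.one_mul,
      Matrix.mul_assoc]
  | succ n hn ih =>
    simp only [qttEntryM, coreProduct, cappedCores, Fin.val_castSucc, Fin.val_last]
    rw [ih (Nat.le_of_succ_le hnL)]
    simp only [Matrix.mul_assoc]
    rw [← Matrix.mul_assoc (rightCap L v n), rightCap_mul_leftCap L u v hn hnL, Matrix.one_mul]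

theorem hasMatrixQTTRanks_of_coreProduct {L : ℕ} (hL : 0 < L)
    {A : Matrix (Fin (2 ^ L)) (Fin (2 ^ L)) ℝ} (W : ℕ → Fin 2 → Fin 2 → Matrix ι ι ℝ)
    (u v : ι → ℝ)
    (hA : ∀ i m : Fin (2 ^ L),
      A i m = u ᵥ* coreProduct W (binaryDigit L i) (binaryDigit L m) L ⬝ᵥ v) :
    HasMatrixQTTRanks L A (boundaryRanks L (Fintype.card ι)) := by
  refine ⟨if_pos (Or.inl rfl), if_pos (Or.inr le_rfl), cappedCores L u v W, fun i m a b => ?_⟩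
  rw [show bits L i = fun j : Fin L => binaryDigit L i j from rfl,
    show bits L m = fun j : Fin L => binaryDigit L m j from rfl,
    qttEntryM_cappedCores L u v W _ _ hL le_rfl, hA, leftCap, rightCap, if_pos rfl, if_pos rfl]
  simp only [mul_apply, of_apply, vecMul, dotProduct, Finset.sum_mul]

end CoreProduct

section Prolongation

noncomputable def linShape (t : ℝ) : Fin 2 → ℝ := ![1 - t, t]

noncomputable def shapeTensor (t s : ℝ) : Fin 2 × Fin 2 → ℝ :=
  fun p => linShape t p.1 * linShape s p.2

def nodeOverlap (A B : ℕ) : Fin 2 × Fin 2 → ℝ :=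
  fun p => if A + p.1 = B + p.2 ∧ 0 < A + p.1 then 1 else 0

noncomputable def cellPos (k i : ℕ) : ℝ := ((i % 2 ^ k : ℕ) + 1) / 2 ^ k

lemma cellPos_pos (k i : ℕ) : 0 < cellPos k i := by
  unfold cellPos; positivity

lemma cellPos_le_one (k i : ℕ) : cellPos k i ≤ 1 := by
  rw [cellPos, div_le_one (by positivity)]
  exact_mod_cast Nat.mod_lt i (pow_pos two_pos k)

lemma cellPos_zero (i : ℕ) : cellPos 0 i = 1 := by
  simp [cellPos, Nat.mod_one]

lemma div_add_cellPos (k i : ℕ) : ((i / 2 ^ k : ℕ) : ℝ) + cellPos k i = (i + 1) / 2 ^ k := by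
  have h : ((2 ^ k * (i / 2 ^ k) + i % 2 ^ k : ℕ) : ℝ) = i := by rw [Nat.div_add_mod]
  push_cast at h
  rw [cellPos, eq_div_iff (by positivity), add_mul, div_mul_cancel₀ _ (by positivity)]
  linarith

lemma cellPos_succ (k i : ℕ) :
    cellPos (k + 1) i = ((i / 2 ^ k % 2 : ℕ) + cellPos k i) / 2 := by
  rw [cellPos, cellPos, pow_succ, Nat.mod_mul]
  push_cast
  field_simp
  ring

lemma div_two_pow_eq_two_mul_add_mod (k i : ℕ) :
    i / 2 ^ k = 2 * (i / 2 ^ (k + 1)) + i / 2 ^ k % 2 := by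
  rw [pow_succ, ← Nat.div_div_eq_div_mul, Nat.div_add_mod]

lemma max_zero_one_sub_abs_eq_sum_linShape (A j : ℕ) {t : ℝ} (ht0 : 0 < t) (ht1 : t ≤ 1) :
    max 0 (1 - |(A : ℝ) + t - ((j : ℝ) + 1)|) =
      ∑ a : Fin 2, if j + 1 = A + a then linShape t a else 0 := by
  simp only [Fin.sum_univ_two, linShape, Fin.val_zero, Fin.val_one, add_zero,
    Matrix.cons_val_zero, Matrix.cons_val_one]
  rcases (by omega : j + 1 = A ∨ j = A ∨ j + 2 ≤ A ∨ A + 1 ≤ j) with h | h | h | h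
  · have h' : (j : ℝ) + 1 = A := by exact_mod_cast h
    rw [if_pos h, if_neg (by omega), ← h', abs_of_pos (by linarith), max_eq_right (by linarith)]
    ring
  · have h' : (j : ℝ) = A := by exact_mod_cast h
    rw [if_neg (by omega), if_pos (by omega), h', abs_of_nonpos (by linarith),
      max_eq_right (by linarith)]
    ring
  · have h' : (j : ℝ) + 2 ≤ A := by exact_mod_cast h
    rw [if_neg (by omega), if_neg (by omega), abs_of_pos (by linarith), max_eq_left (by linarith)]
    ring
  · have h' : (A : ℝ) + 1 ≤ j := by exact_mod_cast h
    rw [if_neg (by omega), if_neg (by omega), abs_of_neg (by linarith), max_eq_left (by linarith)]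
    ring

lemma Pmat_apply_eq_sum_linShape {L ℓ : ℕ} (hℓ : ℓ ≤ L) (i : Fin (2 ^ L)) (j : Fin (2 ^ ℓ)) :
    Pmat L ℓ i j = (2 : ℝ) ^ (((ℓ : ℝ) - L) / 2) *
      ∑ a : Fin 2, if (j : ℕ) + 1 = i / 2 ^ (L - ℓ) + a
        then linShape (cellPos (L - ℓ) i) a else 0 := by
  rw [Pmat, ← max_zero_one_sub_abs_eq_sum_linShape _ _ (cellPos_pos _ _) (cellPos_le_one _ _),
    div_add_cellPos]
  have hL : (2 : ℝ) ^ L = 2 ^ ℓ * 2 ^ (L - ℓ) := by rw [← pow_add, Nat.add_sub_cancel' hℓ]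
  have h : (2 : ℝ) ^ ℓ * ((((i : ℕ) : ℝ) + 1) / 2 ^ L - (((j : ℕ) : ℝ) + 1) / 2 ^ ℓ) =
      (((i : ℕ) : ℝ) + 1) / 2 ^ (L - ℓ) - (((j : ℕ) : ℝ) + 1) := by
    rw [hL]; field_simp
  rw [← h, abs_mul, abs_of_pos (pow_pos two_pos ℓ : (0 : ℝ) < 2 ^ ℓ)]

lemma sum_fin_ite_succ_mul_ite_succ {R : Type*} [Semiring R] {N p q : ℕ} (hp : p ≤ N)
    (x y : R) :
    ∑ j : Fin N, (if (j : ℕ) + 1 = p then x else 0) * (if (j : ℕ) + 1 = q then y else 0) =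
      if p = q ∧ 0 < p then x * y else 0 := by
  by_cases hp0 : 0 < p
  · rw [Finset.sum_eq_single ⟨p - 1, by omega⟩]
    · by_cases hpq : p = q
      · subst hpq; simp [Nat.sub_add_cancel hp0, hp0]
      · simp [hpq, Nat.sub_add_cancel hp0]
    · intro j _ hj
      rw [if_neg fun h => hj (Fin.ext (by simp; omega)), zero_mul]
    · simp
  · rw [if_neg (by omega)]
    exact Finset.sum_eq_zero fun j _ => by rw [if_neg (by omega), zero_mul]

lemma Pmat_mul_transpose_apply {L ℓ : ℕ} (hℓ : ℓ ≤ L) (i m : Fin (2 ^ L)) :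
    (Pmat L ℓ * (Pmat L ℓ)ᵀ) i m = (2 : ℝ) ^ ((ℓ : ℝ) - L) *
      (nodeOverlap (i / 2 ^ (L - ℓ)) (m / 2 ^ (L - ℓ)) ⬝ᵥ
        shapeTensor (cellPos (L - ℓ) i) (cellPos (L - ℓ) m)) := by
  have hcell : (i : ℕ) / 2 ^ (L - ℓ) + 1 ≤ 2 ^ ℓ := by
    rw [Nat.add_one_le_iff, Nat.div_lt_iff_lt_mul (by positivity), ← pow_add,
      Nat.add_sub_cancel' hℓ]
    exact i.isLt
  have hc : (2 : ℝ) ^ (((ℓ : ℝ) - L) / 2) * 2 ^ (((ℓ : ℝ) - L) / 2) = 2 ^ ((ℓ : ℝ) - L) := by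
    rw [← Real.rpow_add two_pos, add_halves]
  simp only [mul_apply, transpose_apply, Pmat_apply_eq_sum_linShape hℓ,
    mul_mul_mul_comm _ _ _ (∑ a : Fin 2, _), hc, ← Finset.mul_sum]
  congr 1
  simp only [Finset.sum_mul_sum, dotProduct, Fintype.sum_prod_type, shapeTensor]
  rw [Finset.sum_comm]
  refine Finset.sum_congr rfl fun a _ => ?_
  rw [Finset.sum_comm]
  refine Finset.sum_congr rfl fun b _ => ?_
  rw [sum_fin_ite_succ_mul_ite_succ (by omega), nodeOverlap, ite_mul, one_mul, zero_mul]

end Prolongation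

section Refinement

-- Local node `q.1` of the fine cell `2 A + x` is the node `2 (A + p.1) - (x + q.1) % 2`, where
-- `p.1 = ⌈(x + q.1) / 2⌉`; likewise for the second component.
def refineMatrix (x y : Fin 2) : Matrix (Fin 2 × Fin 2) (Fin 2 × Fin 2) ℝ :=
  of fun p q => if ((x : ℕ) + q.1 + 1) / 2 = p.1 ∧ ((y : ℕ) + q.2 + 1) / 2 = p.2 ∧
    ((x : ℕ) + q.1) % 2 = ((y : ℕ) + q.2) % 2 then 1 else 0

lemma nodeOverlap_two_mul_add (A B : ℕ) (x y : Fin 2) :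
    nodeOverlap (2 * A + x) (2 * B + y) = nodeOverlap A B ᵥ* refineMatrix x y := by
  ext ⟨a, b⟩
  have := x.isLt; have := y.isLt; have := a.isLt; have := b.isLt
  simp only [vecMul, dotProduct, Fintype.sum_prod_type, Fin.sum_univ_two, nodeOverlap,
    refineMatrix, of_apply, Fin.val_zero, Fin.val_one, ite_mul, one_mul, zero_mul]
  split_ifs <;> first | omega | norm_num

noncomputable def coarseShape (x : ℝ) : Matrix (Fin 2) (Fin 2) ℝ :=
  !![1 - x / 2, (1 - x) / 2; x / 2, (1 + x) / 2]

lemma linShape_half_add (x t : ℝ) : linShape ((x + t) / 2) = coarseShape x *ᵥ linShape t := by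
  ext a
  fin_cases a <;> simp [linShape, coarseShape, mulVec, dotProduct] <;> ring

lemma kronecker_mulVec_mul {R m n : Type*} [CommSemiring R] [Fintype m] [Fintype n]
    (M : Matrix m m R) (N : Matrix n n R) (h : m → R) (k : n → R) :
    (M ⊗ₖ N) *ᵥ (fun p => h p.1 * k p.2) = fun p => (M *ᵥ h) p.1 * (N *ᵥ k) p.2 := by
  ext ⟨a, b⟩
  simp only [mulVec, dotProduct, kroneckerMap_apply, Fintype.sum_prod_type, Finset.sum_mul_sum]
  exact Finset.sum_congr rfl fun _ _ => Finset.sum_congr rfl fun _ _ => by ring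

lemma shapeTensor_half_add (x y t s : ℝ) :
    shapeTensor ((x + t) / 2) ((y + s) / 2) =
      (coarseShape x ⊗ₖ coarseShape y) *ᵥ shapeTensor t s := by
  unfold shapeTensor
  rw [kronecker_mulVec_mul, linShape_half_add, linShape_half_add]

end Refinement

section Levels

variable (L : ℕ) {i m : ℕ}

def levelOverlap (i m ℓ : ℕ) : Fin 2 × Fin 2 → ℝ :=
  nodeOverlap (i / 2 ^ (L - ℓ)) (m / 2 ^ (L - ℓ))

noncomputable def levelShape (i m ℓ : ℕ) : Fin 2 × Fin 2 → ℝ :=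
  shapeTensor (cellPos (L - ℓ) i) (cellPos (L - ℓ) m)

lemma levelOverlap_succ {n : ℕ} (hn : n < L) :
    levelOverlap L i m (n + 1) =
      levelOverlap L i m n ᵥ* refineMatrix (binaryDigit L i n) (binaryDigit L m n) := by
  have h₁ : L - n = L - 1 - n + 1 := by omega
  have h₂ : L - (n + 1) = L - 1 - n := by omega
  rw [levelOverlap, levelOverlap, h₁, h₂, div_two_pow_eq_two_mul_add_mod (L - 1 - n) i,
    div_two_pow_eq_two_mul_add_mod (L - 1 - n) m, ← nodeOverlap_two_mul_add]
  rfl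

lemma levelShape_eq_kronecker_mulVec {n : ℕ} (hn : n < L) :
    levelShape L i m n = (coarseShape (binaryDigit L i n : ℕ) ⊗ₖ
      coarseShape (binaryDigit L m n : ℕ)) *ᵥ levelShape L i m (n + 1) := by
  have h₁ : L - n = L - 1 - n + 1 := by omega
  have h₂ : L - (n + 1) = L - 1 - n := by omega
  rw [levelShape, levelShape, h₁, h₂, cellPos_succ, cellPos_succ, shapeTensor_half_add]
  rfl

lemma levelShape_self (i m : ℕ) : levelShape L i m L = shapeTensor 1 1 := by
  rw [levelShape, Nat.sub_self, cellPos_zero, cellPos_zero]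

noncomputable def levelCore (w : ℕ → ℝ) (j : ℕ) (x y : Fin 2) :
    Matrix ((Fin 2 × Fin 2) ⊕ (Fin 2 × Fin 2)) ((Fin 2 × Fin 2) ⊕ (Fin 2 × Fin 2)) ℝ :=
  fromBlocks (refineMatrix x y) (w (j + 1) • refineMatrix x y) 0
    (coarseShape (x : ℕ) ⊗ₖ coarseShape (y : ℕ))

lemma exists_coreProduct_levelCore (w : ℕ → ℝ) (hi : i < 2 ^ L) (hm : m < 2 ^ L) {n : ℕ}
    (hn : n ≤ L) :
    ∃ q, Sum.elim (nodeOverlap 0 0) (w 0 • nodeOverlap 0 0) ᵥ*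
        coreProduct (levelCore w) (binaryDigit L i) (binaryDigit L m) n =
          Sum.elim (levelOverlap L i m n) q ∧
      q ⬝ᵥ levelShape L i m n =
        ∑ ℓ ∈ Finset.range (n + 1), w ℓ * (levelOverlap L i m ℓ ⬝ᵥ levelShape L i m ℓ) := by
  induction n with
  | zero =>
    have h0 : levelOverlap L i m 0 = nodeOverlap 0 0 := by
      rw [levelOverlap, Nat.sub_zero, Nat.div_eq_of_lt hi, Nat.div_eq_of_lt hm]
    refine ⟨w 0 • nodeOverlap 0 0, ?_, ?_⟩
    · rw [coreProduct, vecMul_one, h0]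
    · rw [Finset.sum_range_one, smul_dotProduct, h0, smul_eq_mul]
  | succ n ih =>
    obtain ⟨q, hσ, hq⟩ := ih (by omega)
    set x := binaryDigit L i n
    set y := binaryDigit L m n
    refine ⟨levelOverlap L i m n ᵥ* (w (n + 1) • refineMatrix x y) +
      q ᵥ* (coarseShape (x : ℕ) ⊗ₖ coarseShape (y : ℕ)), ?_, ?_⟩
    · rw [coreProduct, ← vecMul_vecMul, hσ, levelCore, vecMul_fromBlocks, Sum.elim_comp_inl,
        Sum.elim_comp_inr, vecMul_zero, add_zero, levelOverlap_succ L (by omega)]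
    · rw [add_dotProduct, ← dotProduct_mulVec q, ← levelShape_eq_kronecker_mulVec L (by omega),
        hq, vecMul_smul, ← levelOverlap_succ L (by omega), smul_dotProduct, smul_eq_mul,
        Finset.sum_range_succ _ (n + 1)]
      ring

end Levels

theorem hasMatrixQTTRanks_sum_smul_Pmat_mul_transpose {L : ℕ} (hL : 0 < L) (c : ℕ → ℝ) :
    HasMatrixQTTRanks L (∑ ℓ ∈ Finset.range (L + 1), c ℓ • (Pmat L ℓ * (Pmat L ℓ)ᵀ))
      (boundaryRanks L 8) := by
  let w ℓ := c ℓ * (2 : ℝ) ^ ((ℓ : ℝ) - L)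
  have hcard : Fintype.card ((Fin 2 × Fin 2) ⊕ (Fin 2 × Fin 2)) = 8 := rfl
  rw [← hcard]
  refine hasMatrixQTTRanks_of_coreProduct hL (levelCore w)
    (Sum.elim (nodeOverlap 0 0) (w 0 • nodeOverlap 0 0)) (Sum.elim 0 (shapeTensor 1 1))
    fun i m => ?_
  obtain ⟨q, hσ, hq⟩ := exists_coreProduct_levelCore L w i.isLt m.isLt le_rfl
  rw [hσ, sumElim_dotProduct_sumElim, dotProduct_zero, zero_add, ← levelShape_self L i m, hq,
    Matrix.sum_apply]
  refine Finset.sum_congr rfl fun ℓ hℓ => ?_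
  rw [Matrix.smul_apply, Pmat_mul_transpose_apply (by simpa [Nat.lt_succ_iff] using hℓ),
    smul_eq_mul, ← mul_assoc]
  rfl

theorem stmt18_general (δ : ℝ) (L : ℕ) (hL : 0 < L) :
    ∃ rk : ℕ → ℕ, (∀ j : ℕ, 0 < j → j < L → rk j = 8) ∧
      HasMatrixQTTRanks L (precondC δ L) rk :=
  ⟨boundaryRanks L 8, fun _ hj0 hjL => if_neg (by omega),
    hasMatrixQTTRanks_sum_smul_Pmat_mul_transpose hL (muCoeff δ)⟩

/-- QTT representation of the modified BPX preconditioner: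
for `0 < δ < 1` and `L ∈ ℕ`, the preconditioner `C_L = Σ_{ℓ=0}^L μ_{ℓ,δ} P_{ℓ,L}P_{ℓ,L}ᵀ`
admits a matrix QTT decomposition with all (intermediate) ranks equal to `8`. -/
theorem stmt18 (δ : ℝ) (hδ0 : 0 < δ) (hδ1 : δ < 1) (L : ℕ) (hL : 0 < L) :
    ∃ rk : ℕ → ℕ, (∀ j : ℕ, 0 < j → j < L → rk j = 8) ∧
      HasMatrixQTTRanks L (precondC δ L) rk :=
  stmt18_general δ L hL
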